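/- Let m, n be positive integers, B an m×n real matrix with full column rank, Q ∈ ℝ^m, P* = (BᵀB)⁻¹BᵀQ, r* = BP* − Q, and MSEuw = (1/m)∑_{i=1}^m (r*_i)². Assume the entries of r* do not all have the same absolute value. Then at the point (P*, μ*, w*) = (P*, 0, (1/m, …, 1/m)) with parameter E = MSEuw, the Jacobian blocks satisfy dᵀ = 2(r*)ᵀB = 0ᵀ and D = 0, and the Gauss–Seidel iteration matrix G = −L⁻¹U has bottom-right block G33 = 0; consequently G is nilpotent and its spectral radius is 0. -/

import Mathlib

/- At `μ = 0` the coupling blocks of `L` vanish: `D` carries the factor `2μ`, and `dᵀ = 2 (r*)ᵀ B`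
is zero by the normal equations `Bᵀ r* = 0`. So `L` is block diagonal with respect to the
splitting `P | (μ, w)`, hence so is `L⁻¹` (also when `L` is singular and `⁻¹` returns `0`), while
`U` only maps `(μ, w)`-coordinates to `P`-coordinates. Therefore `G = -L⁻¹U` lives in the upper
right block, `G² = 0`, and a nilpotent element has spectral radius `0`. -/

open Matrix Finset

/-- The row-vector block `dᵀ = (2 r ⊙ ((1+μE)u − μ r²) ⊙ e^{−μ r²})ᵀ B` of the
Jacobian `J_F`, with `r = BP − Q`. -/
noncomputable def jacd (m n : ℕ) (B : Matrix (Fin m) (Fin n) ℝ) (Q : Fin m → ℝ)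
    (E : ℝ) (P : Fin n → ℝ) (μ : ℝ) : Fin n → ℝ :=
  let r := B.mulVec P - Q
  Matrix.vecMul (fun i => 2 * r i * ((1 + μ * E) - μ * (r i) ^ 2)
    * Real.exp (-μ * (r i) ^ 2)) B

/-- The block `D = (2μ/σ) diag(e^{−μ r²})((1/σ) diag(r) − u (r ⊙ e^{−μ r²})ᵀ) B`
of the Jacobian `J_F`, with `r = BP − Q` and `σ = ∑ i, e^{−μ r_i²}`. -/
noncomputable def jacD (m n : ℕ) (B : Matrix (Fin m) (Fin n) ℝ) (Q : Fin m → ℝ)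
    (P : Fin n → ℝ) (μ : ℝ) : Matrix (Fin m) (Fin n) ℝ :=
  let r := B.mulVec P - Q
  let σ : ℝ := ∑ i : Fin m, Real.exp (-μ * (r i) ^ 2)
  (2 * μ / σ) • ((Matrix.diagonal fun i => Real.exp (-μ * (r i) ^ 2)) *
    ((1 / σ) • Matrix.diagonal r -
      Matrix.vecMulVec (fun _ => (1 : ℝ))
        (fun j => r j * Real.exp (-μ * (r j) ^ 2))) * B)

/-- The block lower-triangular part `L = [[A, 0, 0], [dᵀ, s, 0], [D, v, I]]` of
the Jacobian `J_F` of the maximum-entropy system with respect to `(P, μ, w)`. -/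
noncomputable def jacL (m n : ℕ) (B : Matrix (Fin m) (Fin n) ℝ) (Q : Fin m → ℝ)
    (E : ℝ) (P : Fin n → ℝ) (μ : ℝ) (w : Fin m → ℝ) :
    Matrix (Fin n ⊕ (Unit ⊕ Fin m)) (Fin n ⊕ (Unit ⊕ Fin m)) ℝ :=
  let r := B.mulVec P - Q
  let σ : ℝ := ∑ i : Fin m, Real.exp (-μ * (r i) ^ 2)
  let A := Bᵀ * Matrix.diagonal w * B
  let s : ℝ := ∑ i : Fin m, (r i) ^ 2 * Real.exp (-μ * (r i) ^ 2) * (E - (r i) ^ 2)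
  let v : Fin m → ℝ := fun k => (1 / σ ^ 2) * Real.exp (-μ * (r k) ^ 2) *
    (σ * (r k) ^ 2 - ∑ i : Fin m, (r i) ^ 2 * Real.exp (-μ * (r i) ^ 2))
  Matrix.fromBlocks A 0
    (Matrix.of fun i j =>
      Sum.elim (fun _ : Unit => jacd m n B Q E P μ j) (fun k => jacD m n B Q P μ k j) i)
    (Matrix.fromBlocks (Matrix.of fun _ _ => s) 0
      (Matrix.of fun k _ => v k) (1 : Matrix (Fin m) (Fin m) ℝ))

/-- The strictly block upper-triangular part `U = [[0, 0, C], [0, 0, 0], [0, 0, 0]]`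
of the Jacobian `J_F`, where `C = Bᵀ diag(r)` with `r = BP − Q`. -/
noncomputable def jacU (m n : ℕ) (B : Matrix (Fin m) (Fin n) ℝ) (Q : Fin m → ℝ)
    (P : Fin n → ℝ) :
    Matrix (Fin n ⊕ (Unit ⊕ Fin m)) (Fin n ⊕ (Unit ⊕ Fin m)) ℝ :=
  let r := B.mulVec P - Q
  let C := Bᵀ * Matrix.diagonal r
  Matrix.fromBlocks 0
    (Matrix.of fun i j => Sum.elim (fun _ : Unit => (0 : ℝ)) (fun k => C i k) j)
    0 0

theorem spectralRadius_eq_zero_of_isNilpotent {𝕜 A : Type*} [NormedField 𝕜] [Ring A]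
    [Algebra 𝕜 A] {a : A} (ha : IsNilpotent a) : spectralRadius 𝕜 a = 0 := by
  obtain ⟨k, hk⟩ := ha
  have hle : spectralRadius 𝕜 a ^ (k + 1) ≤ 0 := by
    simpa [pow_eq_zero_of_le k.le_succ hk] using
      spectrum.spectralRadius_pow_le a (k + 1) k.succ_ne_zero
  exact pow_eq_zero_iff k.succ_ne_zero |>.mp (le_zero_iff.mp hle)

namespace Matrix

variable {m n : Type*} [Fintype m] [Fintype n]

theorem vecMul_leastSquares_residual_eq_zero {R : Type*} [CommRing R] [DecidableEq n]
    (B : Matrix m n R) (Q : m → R) (hB : IsUnit (Bᵀ * B).det) :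
    vecMul (B *ᵥ (((Bᵀ * B)⁻¹ * Bᵀ) *ᵥ Q) - Q) B = 0 := by
  rw [← mulVec_transpose, mulVec_sub, mulVec_mulVec, mulVec_mulVec, ← Matrix.mul_assoc,
    mul_nonsing_inv _ hB, Matrix.one_mul, sub_self]

theorem exists_inv_fromBlocks_zero_zero {K : Type*} [Field K] [DecidableEq m] [DecidableEq n]
    (A : Matrix m m K) (D : Matrix n n K) :
    ∃ A' D', (fromBlocks A 0 0 D)⁻¹ = fromBlocks A' 0 0 D' := by
  by_cases hAD : IsUnit A ↔ IsUnit D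
  · exact ⟨_, _, by simpa using inv_fromBlocks_zero₁₂_of_isUnit_iff A 0 D hAD⟩
  · have hL : ¬IsUnit (fromBlocks A 0 0 D) := by
      rw [isUnit_fromBlocks_zero₁₂]
      tauto
    exact ⟨0, 0, by rw [nonsing_inv_eq_ringInverse, Ring.inverse_non_unit _ hL, fromBlocks_zero]⟩

end Matrix

section Jacobian

variable (m n : ℕ) (B : Matrix (Fin m) (Fin n) ℝ) (Q : Fin m → ℝ) (E : ℝ) (P : Fin n → ℝ)

theorem jacd_zero : jacd m n B Q E P 0 = vecMul (fun i => 2 * (B *ᵥ P - Q) i) B := by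
  simp [jacd]

theorem jacD_zero : jacD m n B Q P 0 = 0 := by
  simp [jacD]

theorem jacL_toBlocks₁₂ (μ : ℝ) (w : Fin m → ℝ) : (jacL m n B Q E P μ w).toBlocks₁₂ = 0 := by
  simp [jacL]

variable {m n B Q P}

theorem jacd_zero_eq_zero (h : vecMul (B *ᵥ P - Q) B = 0) : jacd m n B Q E P 0 = 0 := by
  rw [jacd_zero, show (fun i => 2 * (B *ᵥ P - Q) i) = (2 : ℝ) • (B *ᵥ P - Q) from rfl,
    smul_vecMul, h, smul_zero]

theorem jacL_zero_toBlocks₂₁ (h : vecMul (B *ᵥ P - Q) B = 0) (w : Fin m → ℝ) :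
    (jacL m n B Q E P 0 w).toBlocks₂₁ = 0 := by
  ext i j
  rcases i with _ | k <;> simp [jacL, jacd_zero_eq_zero E h, jacD_zero]

end Jacobian

theorem stmt_16_general (m n : ℕ)
    (B : Matrix (Fin m) (Fin n) ℝ) (Q : Fin m → ℝ)
    (hB : IsUnit (Bᵀ * B).det)
    (Pstar : Fin n → ℝ) (hP : Pstar = ((Bᵀ * B)⁻¹ * Bᵀ).mulVec Q)
    (rstar : Fin m → ℝ) (hr : rstar = B.mulVec Pstar - Q)
    (MSEuw : ℝ)
    (G : Matrix (Fin n ⊕ (Unit ⊕ Fin m)) (Fin n ⊕ (Unit ⊕ Fin m)) ℝ)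
    (hG : G = -((jacL m n B Q MSEuw Pstar 0 (fun _ => 1 / (m : ℝ)))⁻¹
      * jacU m n B Q Pstar)) :
    jacd m n B Q MSEuw Pstar 0 = Matrix.vecMul (fun i => 2 * rstar i) B ∧
    Matrix.vecMul (fun i => 2 * rstar i) B = 0 ∧
    jacD m n B Q Pstar 0 = 0 ∧
    (∀ j k : Fin m, G (Sum.inr (Sum.inr j)) (Sum.inr (Sum.inr k)) = 0) ∧
    IsNilpotent G ∧
    spectralRadius ℂ (G.map (algebraMap ℝ ℂ)) = 0 := by
  have horth : vecMul (B *ᵥ Pstar - Q) B = 0 := hP ▸ vecMul_leastSquares_residual_eq_zero B Q hB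
  have hd : jacd m n B Q MSEuw Pstar 0 = vecMul (fun i => 2 * rstar i) B := by rw [jacd_zero, hr]
  set L := jacL m n B Q MSEuw Pstar 0 (fun _ => 1 / (m : ℝ))
  have hL : L = fromBlocks L.toBlocks₁₁ 0 0 L.toBlocks₂₂ := by
    conv_lhs => rw [← fromBlocks_toBlocks L]
    rw [jacL_toBlocks₁₂, jacL_zero_toBlocks₂₁ MSEuw horth]
  obtain ⟨A', D', hLinv⟩ := exists_inv_fromBlocks_zero_zero L.toBlocks₁₁ L.toBlocks₂₂
  have hX : G = fromBlocks 0 (-(A' * (jacU m n B Q Pstar).toBlocks₁₂)) 0 0 := by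
    rw [hG, hL, hLinv, jacU, fromBlocks_multiply, fromBlocks_neg]
    simp
  have hnil : IsNilpotent G := ⟨2, by rw [hX, sq, fromBlocks_multiply]; simp⟩
  exact ⟨hd, hd ▸ jacd_zero_eq_zero MSEuw horth, jacD_zero m n B Q Pstar,
    fun j k => by simp [hX], hnil,
    spectralRadius_eq_zero_of_isNilpotent (hnil.map (algebraMap ℝ ℂ).mapMatrix)⟩

/-- At the ordinary least-squares point
`(P*, μ*, w*) = (P*, 0, (1/m,…,1/m))` with parameter `E = MSEuw`, the Jacobian
blocks satisfy `dᵀ = 2(r*)ᵀB = 0ᵀ` and `D = 0`; the Gauss–Seidel iteration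
matrix `G = −L⁻¹U` has zero bottom-right block `G33`, is nilpotent, and its
spectral radius is `0`. -/
theorem stmt_16 (m n : ℕ) (hm : 0 < m) (hn : 0 < n)
    (B : Matrix (Fin m) (Fin n) ℝ) (Q : Fin m → ℝ)
    (hB : IsUnit (Bᵀ * B).det)
    (Pstar : Fin n → ℝ) (hP : Pstar = ((Bᵀ * B)⁻¹ * Bᵀ).mulVec Q)
    (rstar : Fin m → ℝ) (hr : rstar = B.mulVec Pstar - Q)
    (MSEuw : ℝ) (hM : MSEuw = (1 / (m : ℝ)) * ∑ i : Fin m, (rstar i) ^ 2)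
    (hres : ¬ ∀ i j : Fin m, |rstar i| = |rstar j|)
    (G : Matrix (Fin n ⊕ (Unit ⊕ Fin m)) (Fin n ⊕ (Unit ⊕ Fin m)) ℝ)
    (hG : G = -((jacL m n B Q MSEuw Pstar 0 (fun _ => 1 / (m : ℝ)))⁻¹
      * jacU m n B Q Pstar)) :
    jacd m n B Q MSEuw Pstar 0 = Matrix.vecMul (fun i => 2 * rstar i) B ∧
    Matrix.vecMul (fun i => 2 * rstar i) B = 0 ∧
    jacD m n B Q Pstar 0 = 0 ∧
    (∀ j k : Fin m, G (Sum.inr (Sum.inr j)) (Sum.inr (Sum.inr k)) = 0) ∧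
    IsNilpotent G ∧
    spectralRadius ℂ (G.map (algebraMap ℝ ℂ)) = 0 :=
  stmt_16_general m n B Q hB Pstar hP rstar hr MSEuw G hG
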